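/- arXiv:2112.01363 — 2 statements merged into one kernel-verified Lean document; each statement's English description precedes it below -/
import Mathlib

section
/- Let p, q > 0, α ∈ (0,1), β > 1 and set T := 1/(p(1−α)) + 1/(q(β−1)). Suppose y : ℝ → ℝ is differentiable on [0,∞), y(t) ≥ 0 for all t ≥ 0, and its derivative satisfies y′(t) ≤ −p·y(t)^α − q·y(t)^β for all t ≥ 0. Then y(t) = 0 for all t ≥ T. -/
/-- scalar comparison form of the fixed-time stability criterion.
A nonnegative differentiable function `y` on `[0, ∞)` whose derivative satisfies
`y' ≤ -p y^α - q y^β` with `p, q > 0`, `α ∈ (0,1)`, `β > 1` vanishes for all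
`t ≥ T := 1/(p(1-α)) + 1/(q(β-1))`. -/
theorem stmt_0 (p q α β T : ℝ) (hp : 0 < p) (hq : 0 < q)
    (hα : α ∈ Set.Ioo (0 : ℝ) 1) (hβ : 1 < β)
    (hT : T = 1 / (p * (1 - α)) + 1 / (q * (β - 1)))
    (y : ℝ → ℝ)
    (hdiff : ∀ t, 0 ≤ t → DifferentiableAt ℝ y t)
    (hnonneg : ∀ t, 0 ≤ t → 0 ≤ y t)
    (hineq : ∀ t, 0 ≤ t → deriv y t ≤ -p * y t ^ α - q * y t ^ β) :
    ∀ t, T ≤ t → y t = 0 := by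
  obtain ⟨hα0, hα1⟩ := hα
  have hα' : 0 < 1 - α := by linarith
  have hβ' : 0 < β - 1 := by linarith
  have hqβ : 0 < q * (β - 1) := by positivity
  have hpα : 0 < p * (1 - α) := by positivity
  set T2 : ℝ := 1 / (q * (β - 1)) with hT2
  have hT2pos : 0 < T2 := by positivity
  have hTT2 : T2 < T := by
    have : 0 < 1 / (p * (1 - α)) := by positivity
    rw [hT]; linarith
  have hTpos : 0 < T := hT2pos.trans hTT2
  have hcont : ContinuousOn y (Set.Ici 0) := fun t ht =>
    ((hdiff t ht).continuousAt).continuousWithinAt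
  -- `y` is antitone on `[0, ∞)`
  have hanti : AntitoneOn y (Set.Ici 0) := by
    apply antitoneOn_of_deriv_nonpos (convex_Ici 0) hcont
    · intro x hx
      rw [interior_Ici] at hx
      exact (hdiff x hx.le).differentiableWithinAt
    · intro x hx
      rw [interior_Ici] at hx
      have h1 := hineq x hx.le
      have h2 : 0 ≤ y x ^ α := Real.rpow_nonneg (hnonneg x hx.le) α
      have h3 : 0 ≤ y x ^ β := Real.rpow_nonneg (hnonneg x hx.le) β
      nlinarith
  -- main claim : y T = 0
  have hyT : y T = 0 := by
    by_contra hne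
    have hyTpos : 0 < y T :=
      lt_of_le_of_ne (hnonneg T hTpos.le) (Ne.symm hne)
    have hpos : ∀ t, 0 ≤ t → t ≤ T → 0 < y t := fun t ht htT =>
      lt_of_lt_of_le hyTpos (hanti ht hTpos.le htT)
    by_cases hcase : y T2 ≤ 1
    · -- Phase 1 : on [T2, T], w = y^(1-α) decays at rate p(1-α)
      have hmono : AntitoneOn (fun t => y t ^ (1 - α) + p * (1 - α) * t)
          (Set.Icc T2 T) := by
        apply antitoneOn_of_deriv_nonpos (convex_Icc _ _)
        · apply ContinuousOn.add
          · intro t ht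
            exact (((hdiff t (hT2pos.le.trans ht.1)).continuousAt).rpow_const
              (Or.inr hα'.le)).continuousWithinAt
          · exact (continuous_const.mul continuous_id).continuousOn
        · rw [interior_Icc]
          intro x hx
          have hx0 : 0 ≤ x := (hT2pos.trans hx.1).le
          have hyx : 0 < y x := hpos x hx0 hx.2.le
          have hd : HasDerivAt (fun t => y t ^ (1 - α))
              (deriv y x * (1 - α) * y x ^ (1 - α - 1)) x :=
            ((hdiff x hx0).hasDerivAt).rpow_const (Or.inl hyx.ne')
          have hd2 : HasDerivAt (fun t => y t ^ (1 - α) + p * (1 - α) * t)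
              (deriv y x * (1 - α) * y x ^ (1 - α - 1) + p * (1 - α)) x := by
            have h3 : HasDerivAt (fun t : ℝ => p * (1 - α) * t) (p * (1 - α)) x := by
              simpa using (hasDerivAt_id x).const_mul (p * (1 - α))
            exact hd.add h3
          exact hd2.differentiableAt.differentiableWithinAt
        · rw [interior_Icc]
          intro x hx
          have hx0 : 0 ≤ x := (hT2pos.trans hx.1).le
          have hyx : 0 < y x := hpos x hx0 hx.2.le
          have hd : HasDerivAt (fun t => y t ^ (1 - α))
              (deriv y x * (1 - α) * y x ^ (1 - α - 1)) x :=
            ((hdiff x hx0).hasDerivAt).rpow_const (Or.inl hyx.ne')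
          have hd2 : HasDerivAt (fun t => y t ^ (1 - α) + p * (1 - α) * t)
              (deriv y x * (1 - α) * y x ^ (1 - α - 1) + p * (1 - α)) x := by
            have h3 : HasDerivAt (fun t : ℝ => p * (1 - α) * t) (p * (1 - α)) x := by
              simpa using (hasDerivAt_id x).const_mul (p * (1 - α))
            exact hd.add h3
          rw [hd2.deriv]
          have hm : 0 < y x ^ (1 - α - 1) := Real.rpow_pos_of_pos hyx _
          have e1 : y x ^ α * y x ^ (1 - α - 1) = 1 := by
            rw [← Real.rpow_add hyx, show α + (1 - α - 1) = 0 by ring, Real.rpow_zero]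
          have e2 : 0 ≤ y x ^ β * y x ^ (1 - α - 1) :=
            le_of_lt (mul_pos (Real.rpow_pos_of_pos hyx _) hm)
          have hdm := mul_le_mul_of_nonneg_right (hineq x hx0) hm.le
          have hdm2 : deriv y x * y x ^ (1 - α - 1) ≤ -p := by nlinarith [hdm, e1, e2]
          nlinarith [mul_le_mul_of_nonneg_left hdm2 hα'.le]
      have key := hmono (Set.left_mem_Icc.2 hTT2.le)
        (Set.right_mem_Icc.2 hTT2.le) hTT2.le
      have h1 : y T2 ^ (1 - α) ≤ 1 :=
        Real.rpow_le_one (hnonneg T2 hT2pos.le) hcase hα'.le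
      have h2 : 0 < y T ^ (1 - α) := Real.rpow_pos_of_pos hyTpos _
      have h3 : p * (1 - α) * (T - T2) = 1 := by
        have : T - T2 = 1 / (p * (1 - α)) := by rw [hT, hT2]; ring
        rw [this]; field_simp
      simp only [] at key
      nlinarith
    · -- Phase 2 : on [0, T2], v = y^(1-β) grows at rate q(β-1)
      push_neg at hcase
      have hbig : ∀ t, 0 ≤ t → t ≤ T2 → 1 < y t := fun t ht htT2 =>
        lt_of_lt_of_le hcase (hanti ht hT2pos.le htT2)
      have hmono : MonotoneOn (fun t => y t ^ (1 - β) - q * (β - 1) * t)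
          (Set.Icc 0 T2) := by
        apply monotoneOn_of_deriv_nonneg (convex_Icc _ _)
        · apply ContinuousOn.sub
          · intro t ht
            have : (0:ℝ) < y t := lt_trans one_pos (hbig t ht.1 ht.2)
            exact (((hdiff t ht.1).continuousAt).rpow_const
              (Or.inl this.ne')).continuousWithinAt
          · exact (continuous_const.mul continuous_id).continuousOn
        · rw [interior_Icc]
          intro x hx
          have hyx : 0 < y x := lt_trans one_pos (hbig x hx.1.le hx.2.le)
          have hd : HasDerivAt (fun t => y t ^ (1 - β))
              (deriv y x * (1 - β) * y x ^ (1 - β - 1)) x :=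
            ((hdiff x hx.1.le).hasDerivAt).rpow_const (Or.inl hyx.ne')
          have hd2 : HasDerivAt (fun t => y t ^ (1 - β) - q * (β - 1) * t)
              (deriv y x * (1 - β) * y x ^ (1 - β - 1) - q * (β - 1)) x := by
            have h3 : HasDerivAt (fun t : ℝ => q * (β - 1) * t) (q * (β - 1)) x := by
              simpa using (hasDerivAt_id x).const_mul (q * (β - 1))
            exact hd.sub h3
          exact hd2.differentiableAt.differentiableWithinAt
        · rw [interior_Icc]
          intro x hx
          have hyx : 0 < y x := lt_trans one_pos (hbig x hx.1.le hx.2.le)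
          have hd : HasDerivAt (fun t => y t ^ (1 - β))
              (deriv y x * (1 - β) * y x ^ (1 - β - 1)) x :=
            ((hdiff x hx.1.le).hasDerivAt).rpow_const (Or.inl hyx.ne')
          have hd2 : HasDerivAt (fun t => y t ^ (1 - β) - q * (β - 1) * t)
              (deriv y x * (1 - β) * y x ^ (1 - β - 1) - q * (β - 1)) x := by
            have h3 : HasDerivAt (fun t : ℝ => q * (β - 1) * t) (q * (β - 1)) x := by
              simpa using (hasDerivAt_id x).const_mul (q * (β - 1))
            exact hd.sub h3
          rw [hd2.deriv]
          have hm : 0 < y x ^ (1 - β - 1) := Real.rpow_pos_of_pos hyx _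
          have e1 : y x ^ β * y x ^ (1 - β - 1) = 1 := by
            rw [← Real.rpow_add hyx, show β + (1 - β - 1) = 0 by ring, Real.rpow_zero]
          have e2 : 0 ≤ y x ^ α * y x ^ (1 - β - 1) :=
            le_of_lt (mul_pos (Real.rpow_pos_of_pos hyx _) hm)
          have hdm := mul_le_mul_of_nonneg_right (hineq x hx.1.le) hm.le
          have hdm2 : deriv y x * y x ^ (1 - β - 1) ≤ -q := by nlinarith [hdm, e1, e2]
          nlinarith [mul_le_mul_of_nonneg_left hdm2 hβ'.le]
      have key := hmono (Set.left_mem_Icc.2 hT2pos.le)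
        (Set.right_mem_Icc.2 hT2pos.le) hT2pos.le
      have h1 : y T2 ^ (1 - β) < 1 :=
        Real.rpow_lt_one_of_one_lt_of_neg hcase (by linarith)
      have hy0 : (0:ℝ) < y 0 := lt_trans one_pos (hbig 0 le_rfl hT2pos.le)
      have h2 : 0 < y 0 ^ (1 - β) := Real.rpow_pos_of_pos hy0 _
      have h3 : q * (β - 1) * T2 = 1 := by rw [hT2]; field_simp
      simp only [] at key
      nlinarith
  intro t ht
  have h1 : y t ≤ y T := hanti hTpos.le (hTpos.le.trans ht) ht
  have h2 : 0 ≤ y t := hnonneg t (hTpos.le.trans ht)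
  linarith [hyT ▸ h1, h2]
end

section
/- Let g : ℝ^n → ℝ^n with g(0) = 0, and let V : ℝ^n → ℝ be differentiable with V(0) = 0 and V(x) > 0 for all x ≠ 0. Suppose there exist p, q > 0, α ∈ (0,1), β > 1 such that the directional derivative satisfies ⟨∇V(x), g(x)⟩ ≤ −p·V(x)^α − q·V(x)^β for all x ≠ 0. Then every differentiable curve x : ℝ → ℝ^n satisfying x′(t) = g(x(t)) for all t ≥ 0 satisfies x(t) = 0 for all t ≥ T, where T := 1/(p(1−α)) + 1/(q(β−1)). -/
/-! Along a solution, `v = V ∘ x` is nonincreasing and, while positive, satisfies both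
`v' ≤ -q v^β` and `v' ≤ -p v^α`. The first makes `v^(1-β)` grow at rate at least `q(β-1)`,
so `v ≤ 1` by time `1/(q(β-1))` whatever `v 0` is; the second then makes `v^(1-α)` fall at rate
at least `p(1-α)`, so `v` cannot stay positive for a further `1/(p(1-α))`. -/

open Set
open scoped RealInnerProductSpace

theorem HasGradientAt.comp_hasDerivAt {F : Type*} [NormedAddCommGroup F] [InnerProductSpace ℝ F]
    [CompleteSpace F] {f : F → ℝ} {f' : F} {γ : ℝ → F} {γ' : F} {t : ℝ}
    (hf : HasGradientAt f f' (γ t)) (hγ : HasDerivAt γ γ' t) :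
    HasDerivAt (f ∘ γ) ⟪f', γ'⟫ t := by
  simpa only [InnerProductSpace.toDual_apply_apply] using hf.hasFDerivAt.comp_hasDerivAt t hγ

/-- At a zero of a nonnegative function the derivative vanishes (Fermat). -/
theorem antitoneOn_Ici_of_nonneg_of_deriv_nonpos_of_pos {v v' : ℝ → ℝ} {a : ℝ}
    (hv_nonneg : ∀ s ≥ a, 0 ≤ v s) (hv : ∀ s ≥ a, HasDerivAt v (v' s) s)
    (hv' : ∀ s ≥ a, 0 < v s → v' s ≤ 0) : AntitoneOn v (Ici a) := by
  refine antitoneOn_of_hasDerivWithinAt_nonpos (convex_Ici a)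
    (fun s hs => (hv s hs).continuousAt.continuousWithinAt)
    (fun s hs => (hv s (interior_subset hs)).hasDerivWithinAt) fun s hs => ?_
  rw [interior_Ici] at hs
  rcases (hv_nonneg s hs.le).eq_or_lt with hzero | hpos
  · have hmin : IsLocalMin v s :=
      Filter.mem_of_superset (Ici_mem_nhds hs) fun r hr => hzero ▸ hv_nonneg r hr
    exact (hmin.hasDerivAt_eq_zero (hv s hs.le)).le
  · exact hv' s hs.le hpos

/-- `v ^ (1 - γ) / (1 - γ)` has derivative `v ^ (-γ) * v'`, which is at most `-c`. -/
theorem rpow_one_sub_div_sub_le_of_deriv_le {v v' : ℝ → ℝ} {a b c γ : ℝ} (hγ : γ ≠ 1)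
    (hab : a ≤ b) (hv_pos : ∀ s ∈ Icc a b, 0 < v s)
    (hv : ∀ s ∈ Icc a b, HasDerivAt v (v' s) s)
    (hv' : ∀ s ∈ Icc a b, v' s ≤ -c * v s ^ γ) :
    v b ^ (1 - γ) / (1 - γ) - v a ^ (1 - γ) / (1 - γ) ≤ -c * (b - a) := by
  have hderiv : ∀ s ∈ Icc a b,
      HasDerivAt (fun s => v s ^ (1 - γ) / (1 - γ)) (v s ^ (-γ) * v' s) s := by
    intro s hs
    refine (((hv s hs).rpow_const (p := 1 - γ) (Or.inl (hv_pos s hs).ne')).div_const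
      (1 - γ)).congr_deriv ?_
    field_simp [sub_ne_zero.2 hγ.symm]
    ring_nf
  have hbound : ∀ s ∈ Icc a b, v s ^ (-γ) * v' s ≤ -c := by
    intro s hs
    have hpow : v s ^ (-γ) * v s ^ γ = 1 := by
      rw [← Real.rpow_add (hv_pos s hs), neg_add_cancel, Real.rpow_zero]
    calc v s ^ (-γ) * v' s ≤ v s ^ (-γ) * (-c * v s ^ γ) :=
          mul_le_mul_of_nonneg_left (hv' s hs) (Real.rpow_nonneg (hv_pos s hs).le _)
      _ = -c := by rw [mul_left_comm, hpow, mul_one]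
  exact (convex_Icc a b).image_sub_le_mul_sub_of_deriv_le
    (fun s hs => (hderiv s hs).continuousAt.continuousWithinAt)
    (fun s hs => (hderiv s (interior_subset hs)).differentiableAt.differentiableWithinAt)
    (fun s hs => (hderiv s (interior_subset hs)).deriv ▸ hbound s (interior_subset hs))
    a (left_mem_Icc.2 hab) b (right_mem_Icc.2 hab) hab

theorem eq_zero_of_hasDerivAt_le_neg_rpow_sub_rpow {v v' : ℝ → ℝ} {p q α β : ℝ}
    (hp : 0 < p) (hq : 0 < q) (hα : α < 1) (hβ : 1 < β)
    (hv_nonneg : ∀ s ≥ 0, 0 ≤ v s) (hv : ∀ s ≥ 0, HasDerivAt v (v' s) s)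
    (hv' : ∀ s ≥ 0, 0 < v s → v' s ≤ -p * v s ^ α - q * v s ^ β)
    {t : ℝ} (ht : 1 / (p * (1 - α)) + 1 / (q * (β - 1)) ≤ t) : v t = 0 := by
  have hα_bound : ∀ s ≥ 0, 0 < v s → v' s ≤ -p * v s ^ α := fun s hs hvs => by
    have := Real.rpow_pos_of_pos hvs β; nlinarith [hv' s hs hvs]
  have hβ_bound : ∀ s ≥ 0, 0 < v s → v' s ≤ -q * v s ^ β := fun s hs hvs => by
    have := Real.rpow_pos_of_pos hvs α; nlinarith [hv' s hs hvs]
  have hanti : AntitoneOn v (Ici 0) :=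
    antitoneOn_Ici_of_nonneg_of_deriv_nonpos_of_pos hv_nonneg hv fun s hs hvs => by
      have := Real.rpow_pos_of_pos hvs β; nlinarith [hβ_bound s hs hvs]
  have hα₁ : 0 < 1 - α := sub_pos.2 hα
  have hβ₁ : 0 < β - 1 := sub_pos.2 hβ
  set T₁ := 1 / (q * (β - 1)) with hT₁
  have hT₁_pos : 0 < T₁ := by positivity
  have hT₂_pos : 0 < 1 / (p * (1 - α)) := by positivity
  have hT₁_le : T₁ ≤ t := by linarith
  by_contra hvt
  have hpos : ∀ s ∈ Icc 0 t, 0 < v s := fun s hs =>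
    ((hv_nonneg t (hs.1.trans hs.2)).lt_of_ne' hvt).trans_le (hanti hs.1 (hs.1.trans hs.2) hs.2)
  have hβ_phase : v T₁ ≤ 1 := by
    have h := rpow_one_sub_div_sub_le_of_deriv_le hβ.ne' hT₁_pos.le
      (fun s hs => hpos s ⟨hs.1, hs.2.trans hT₁_le⟩) (fun s hs => hv s hs.1)
      fun s hs => hβ_bound s hs.1 (hpos s ⟨hs.1, hs.2.trans hT₁_le⟩)
    rw [div_sub_div_same, div_le_iff_of_neg (by linarith)] at h
    have hqT : q * (T₁ - 0) * (β - 1) = 1 := by rw [hT₁, sub_zero]; field_simp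
    have h0 : 0 < v 0 ^ (1 - β) :=
      Real.rpow_pos_of_pos (hpos 0 ⟨le_rfl, hT₁_pos.le.trans hT₁_le⟩) _
    by_contra! hgt
    linarith [Real.rpow_lt_one_of_one_lt_of_neg hgt (by linarith : 1 - β < 0)]
  have hα_phase : t - T₁ < 1 / (p * (1 - α)) := by
    have h := rpow_one_sub_div_sub_le_of_deriv_le hα.ne hT₁_le
      (fun s hs => hpos s ⟨hT₁_pos.le.trans hs.1, hs.2⟩)
      (fun s hs => hv s (hT₁_pos.le.trans hs.1))
      fun s hs => hα_bound s (hT₁_pos.le.trans hs.1) (hpos s ⟨hT₁_pos.le.trans hs.1, hs.2⟩)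
    rw [div_sub_div_same, div_le_iff₀ hα₁] at h
    have ht0 : 0 < v t ^ (1 - α) :=
      Real.rpow_pos_of_pos (hpos t ⟨hT₁_pos.le.trans hT₁_le, le_rfl⟩) _
    have h1 : v T₁ ^ (1 - α) ≤ 1 :=
      Real.rpow_le_one (hpos T₁ ⟨hT₁_pos.le, hT₁_le⟩).le hβ_phase (by linarith)
    rw [lt_div_iff₀ (by positivity)]
    linarith
  linarith

theorem stmt_1_general (n : ℕ)
    (g : EuclideanSpace ℝ (Fin n) → EuclideanSpace ℝ (Fin n))
    (V : EuclideanSpace ℝ (Fin n) → ℝ)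
    (V' : EuclideanSpace ℝ (Fin n) → EuclideanSpace ℝ (Fin n))
    (hV : ∀ x, HasGradientAt V (V' x) x)
    (hV0 : V 0 = 0) (hVpos : ∀ x, x ≠ 0 → 0 < V x)
    (p q α β T : ℝ) (hp : 0 < p) (hq : 0 < q)
    (hα : α ∈ Set.Ioo (0 : ℝ) 1) (hβ : 1 < β)
    (hT : T = 1 / (p * (1 - α)) + 1 / (q * (β - 1)))
    (hineq : ∀ x, x ≠ 0 → ⟪V' x, g x⟫ ≤ -p * V x ^ α - q * V x ^ β) :
    ∀ x : ℝ → EuclideanSpace ℝ (Fin n),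
      (∀ t, 0 ≤ t → HasDerivAt x (g (x t)) t) →
      ∀ t, T ≤ t → x t = 0 := by
  intro x hx t ht
  have hV_nonneg : ∀ y, 0 ≤ V y := fun y => by
    rcases eq_or_ne y 0 with rfl | hy
    · exact hV0.ge
    · exact (hVpos y hy).le
  have hVt : V (x t) = 0 :=
    eq_zero_of_hasDerivAt_le_neg_rpow_sub_rpow (v := V ∘ x) hp hq hα.2 hβ
      (fun s _ => hV_nonneg (x s)) (fun s hs => (hV (x s)).comp_hasDerivAt (hx s hs))
      (fun s _ hVs => hineq (x s) fun hxs => by simp [Function.comp, hxs, hV0] at hVs) (hT ▸ ht)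
  by_contra hxt
  exact (hVpos (x t) hxt).ne' hVt

/-- fixed-time stability of the origin for `ẋ = g(x)` via a
Lyapunov function `V` satisfying `⟨∇V(x), g(x)⟩ ≤ -p V(x)^α - q V(x)^β`. -/
theorem stmt_1 (n : ℕ)
    (g : EuclideanSpace ℝ (Fin n) → EuclideanSpace ℝ (Fin n)) (hg0 : g 0 = 0)
    (V : EuclideanSpace ℝ (Fin n) → ℝ)
    (V' : EuclideanSpace ℝ (Fin n) → EuclideanSpace ℝ (Fin n))
    (hV : ∀ x, HasGradientAt V (V' x) x)
    (hV0 : V 0 = 0) (hVpos : ∀ x, x ≠ 0 → 0 < V x)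
    (p q α β T : ℝ) (hp : 0 < p) (hq : 0 < q)
    (hα : α ∈ Set.Ioo (0 : ℝ) 1) (hβ : 1 < β)
    (hT : T = 1 / (p * (1 - α)) + 1 / (q * (β - 1)))
    (hineq : ∀ x, x ≠ 0 → ⟪V' x, g x⟫ ≤ -p * V x ^ α - q * V x ^ β) :
    ∀ x : ℝ → EuclideanSpace ℝ (Fin n),
      (∀ t, 0 ≤ t → HasDerivAt x (g (x t)) t) →
      ∀ t, T ≤ t → x t = 0 :=
  stmt_1_general n g V V' hV hV0 hVpos p q α β T hp hq hα hβ hT hineq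
end
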